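/- Let ℐ be the family of independent sets of a symplectic matroid (E_{±n}, ℬ), and let I and J be members of ℐ such that |I| < |J| and such that for all y ∈ J∖I the set {y} ∪ I is not in ℐ. Define W = I ∖ (−J), Y = J ∖ (I ∪ (−I)), Z = I ∩ (−J), and X = E_{±n} ∖ (W ∪ (−W) ∪ Y ∪ (−Y) ∪ Z ∪ (−Z)). Then the set S = {x ∈ X : {x} ∪ W ∈ ℐ and {−x} ∪ W ∈ ℐ} ∪ {y ∈ Y : {y} ∪ W ∈ ℐ} is nonempty. -/

import Mathlib

/-- The ground set `E_{±n} = {±1, ±2, …, ±n}` as a finite set of integers. -/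
noncomputable def SympE (n : ℕ) : Finset ℤ := (Finset.Icc (-(n : ℤ)) (n : ℤ)).erase 0

/-- `negSet S = {-s : s ∈ S}`. -/
def negSet (S : Finset ℤ) : Finset ℤ := S.image (fun x => -x)

/-- A set `S` is admissible if `S ∩ (-S) = ∅`. -/
def IsAdmissibleSet (S : Finset ℤ) : Prop := ∀ s ∈ S, -s ∉ S

/-- An admissible permutation of `E_{±n}`: a permutation of `ℤ` mapping `E_{±n}` to
itself and commuting with negation.  It induces the admissible total ordering
`x ≺ y ↔ w x < w y` on `E_{±n}`. -/
def IsAdmissiblePerm (n : ℕ) (w : Equiv.Perm ℤ) : Prop :=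
  (∀ x ∈ SympE n, w x ∈ SympE n) ∧ ∀ x : ℤ, w (-x) = -(w x)

/-- A weight function `ω` compatible with the admissible ordering induced by `w`:
`i ≺ j` implies `ω i ≤ ω j`. -/
def IsCompatibleWeight (n : ℕ) (w : Equiv.Perm ℤ) (ω : ℤ → ℝ) : Prop :=
  ∀ i ∈ SympE n, ∀ j ∈ SympE n, w i < w j → ω i ≤ ω j

/-- The elements of `E_{±n}` listed from largest to smallest with respect to the
admissible ordering induced by `w`. -/
noncomputable def orderList (n : ℕ) (w : Equiv.Perm ℤ) : List ℤ :=
  (((SympE n).sort (· ≤ ·)).reverse).map w.symm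

/-- The greedy algorithm: processing the elements of the list in order, starting
with the current set `B`, pick up an element iff adding it keeps the current set
a subset of some member of `ℬ`.  Returns the list of picked-up elements in order. -/
def greedyAux (ℬ : Finset (Finset ℤ)) : List ℤ → Finset ℤ → List ℤ
  | [], _ => []
  | a :: l, B =>
      if ∃ B' ∈ ℬ, insert a B ⊆ B' then a :: greedyAux ℬ l (insert a B)
      else greedyAux ℬ l B

/-- The list of elements picked up by the greedy algorithm on `ℬ`, in decreasing
order with respect to the admissible ordering induced by `w`. -/
noncomputable def greedyPicks (n : ℕ) (ℬ : Finset (Finset ℤ)) (w : Equiv.Perm ℤ) : List ℤ :=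
  greedyAux ℬ (orderList n w) ∅

/-- The greedy solution of `ℬ` with respect to the admissible ordering induced
by `w`. -/
noncomputable def greedySol (n : ℕ) (ℬ : Finset (Finset ℤ)) (w : Equiv.Perm ℤ) : Finset ℤ :=
  (greedyPicks n ℬ w).toFinset

/-- `(E_{±n}, ℬ)` is a symplectic matroid: `ℬ` is a nonempty family of
equinumerous admissible subsets of `E_{±n}` such that for every admissible
ordering and every compatible weight function the greedy solution is optimal. -/
def IsSymplecticMatroid (n : ℕ) (ℬ : Finset (Finset ℤ)) : Prop :=
  ℬ.Nonempty ∧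
  (∀ B ∈ ℬ, B ⊆ SympE n ∧ IsAdmissibleSet B) ∧
  (∀ B ∈ ℬ, ∀ B' ∈ ℬ, B.card = B'.card) ∧
  (∀ w : Equiv.Perm ℤ, IsAdmissiblePerm n w →
    ∀ ω : ℤ → ℝ, IsCompatibleWeight n w ω →
      ∀ B' ∈ ℬ, ∑ b ∈ B', ω b ≤ ∑ b ∈ greedySol n ℬ w, ω b)

/-- The family of independent sets of `(E_{±n}, ℬ)`:
all subsets of `E_{±n}` contained in some member of `ℬ`. -/
noncomputable def indepSets (n : ℕ) (ℬ : Finset (Finset ℤ)) : Finset (Finset ℤ) :=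
  (SympE n).powerset.filter (fun I => ∃ B ∈ ℬ, I ⊆ B)

/-- The collection of maximal (with respect to inclusion) members of `ℐ`. -/
def maximalMembers (ℐ : Finset (Finset ℤ)) : Finset (Finset ℤ) :=
  ℐ.filter (fun B => ∀ I ∈ ℐ, B ⊆ I → I = B)

/-- The independent-set exchange property for symplectic matroids. -/
def ExchangeProp (ℐ : Finset (Finset ℤ)) : Prop :=
  ∀ I ∈ ℐ, ∀ J ∈ ℐ, I.card < J.card →
    (∀ y ∈ J \ I, insert y I ∉ ℐ) →
      ¬ IsAdmissibleSet (I ∪ J) ∧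
        ∃ x, x ∉ I ∧ insert x I ∈ ℐ ∧ insert (-x) (I \ negSet J) ∈ ℐ

/-!
Suppose `S` is empty, so no `y ∈ Y` can be added to `W`. The set `U = W ∪ J` is admissible,
so there is an admissible order of `E_{±n}` listing `W` first, then the rest of `U`, then
everything else; the indicator of `U` is a compatible weight. The greedy algorithm takes all
of `W` and then no element of `Y`, so its solution meets `U` inside the admissible set
`U \ Y ⊆ I ∪ -I`, hence in at most `|I|` elements. The basis containing `J` meets `U` in at
least `|J| > |I|` elements, contradicting the optimality of the greedy solution.
-/

section ListSubst

variable {α : Type*} [DecidableEq α] {l l' : List α}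

def listSubst (l l' : List α) (x : α) : α :=
  if x ∈ l then l'.getD (l.idxOf x) x else x

lemma listSubst_getElem (hl : l.Nodup) (hlen : l.length = l'.length) {k : ℕ}
    (hk : k < l.length) : listSubst l l' l[k] = l'[k] := by
  rw [listSubst, if_pos (List.getElem_mem hk), hl.idxOf_getElem,
    List.getD_eq_getElem _ _ (hlen ▸ hk)]

lemma listSubst_of_notMem {x : α} (hx : x ∉ l) : listSubst l l' x = x := if_neg hx

lemma listSubst_listSubst (hl : l.Nodup) (hl' : l'.Nodup) (hmem : ∀ x, x ∈ l ↔ x ∈ l')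
    (x : α) : listSubst l' l (listSubst l l' x) = x := by
  have hlen : l.length = l'.length := ((List.perm_ext_iff_of_nodup hl hl').mpr hmem).length_eq
  by_cases hx : x ∈ l
  · obtain ⟨k, hk, rfl⟩ := List.getElem_of_mem hx
    rw [listSubst_getElem hl hlen hk, listSubst_getElem hl' hlen.symm (hlen ▸ hk)]
  · rw [listSubst_of_notMem hx, listSubst_of_notMem (mt (hmem x).mpr hx)]

lemma List.exists_perm_map_eq (hl : l.Nodup) (hl' : l'.Nodup) (hmem : ∀ x, x ∈ l ↔ x ∈ l') :
    ∃ w : Equiv.Perm α, l.map w = l' ∧ ∀ x ∉ l, w x = x := by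
  have hlen : l.length = l'.length := ((List.perm_ext_iff_of_nodup hl hl').mpr hmem).length_eq
  refine ⟨⟨listSubst l l', listSubst l' l, listSubst_listSubst hl hl' hmem,
    listSubst_listSubst hl' hl fun x => (hmem x).symm⟩, ?_, fun x => listSubst_of_notMem⟩
  refine List.ext_getElem (by simpa using hlen) fun k hk _ => ?_
  simpa using listSubst_getElem hl hlen (by simpa using hk)

end ListSubst

lemma sort_reverse_eq_map_neg {s : Finset ℤ} (hs : ∀ x ∈ s, -x ∈ s) :
    (s.sort (· ≤ ·)).reverse = (s.sort (· ≤ ·)).map (- ·) := by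
  have hlt := (Finset.sortedLT_sort s).pairwise
  refine List.Pairwise.eq_of_mem_iff (r := (· > ·)) ?_ ?_ fun x => ?_
  · exact List.pairwise_reverse.mpr hlt
  · exact List.pairwise_map.mpr (hlt.imp neg_lt_neg)
  · simp only [List.mem_reverse, Finset.mem_sort, List.mem_map]
    exact ⟨fun hx => ⟨-x, hs x hx, neg_neg x⟩, by rintro ⟨y, hy, rfl⟩; exact hs y hy⟩

lemma mem_negSet {S : Finset ℤ} {x : ℤ} : x ∈ negSet S ↔ -x ∈ S := by
  simp only [negSet, Finset.mem_image]
  exact ⟨by rintro ⟨a, ha, rfl⟩; simpa, fun h => ⟨-x, h, neg_neg x⟩⟩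

lemma neg_mem_sympE {n : ℕ} {x : ℤ} (hx : x ∈ SympE n) : -x ∈ SympE n := by
  simp only [SympE, Finset.mem_erase, Finset.mem_Icc] at hx ⊢
  omega

lemma IsAdmissibleSet.mono {A B : Finset ℤ} (hB : IsAdmissibleSet B) (hAB : A ⊆ B) :
    IsAdmissibleSet A :=
  fun x hx hnx => hB x (hAB hx) (hAB hnx)

lemma IsAdmissibleSet.union {A B : Finset ℤ} (hA : IsAdmissibleSet A) (hB : IsAdmissibleSet B)
    (hAB : ∀ x ∈ A, -x ∉ B) : IsAdmissibleSet (A ∪ B) := by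
  intro x hx hnx
  rcases Finset.mem_union.mp hx with hx | hx <;> rcases Finset.mem_union.mp hnx with hnx | hnx
  · exact hA x hx hnx
  · exact hAB x hx hnx
  · exact hAB (-x) hnx (by rwa [neg_neg])
  · exact hB x hx hnx

/-- Folding `A` into `I` by `x ↦ ±x` is injective on an admissible `A`. -/
lemma card_le_of_subset_union_negSet {A I : Finset ℤ} (hA : IsAdmissibleSet A)
    (hAI : A ⊆ I ∪ negSet I) : A.card ≤ I.card := by
  refine Finset.card_le_card_of_injOn (fun x => if x ∈ I then x else -x) ?_ ?_
  · intro x hx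
    have := hAI hx
    simp only [Finset.mem_union, mem_negSet] at this
    simp only [Finset.mem_coe]
    split_ifs with h
    · exact h
    · exact this.resolve_left h
  · intro x hx y hy hxy
    simp only at hxy
    split_ifs at hxy with h1 h2 h2
    · exact hxy
    · exact absurd (hxy ▸ hx) (by simpa using hA y hy)
    · exact absurd (hxy ▸ hy) (hA x hx)
    · exact neg_injective hxy

lemma mem_indepSets {n : ℕ} {ℬ : Finset (Finset ℤ)} {I : Finset ℤ} :
    I ∈ indepSets n ℬ ↔ I ⊆ SympE n ∧ ∃ B ∈ ℬ, I ⊆ B := by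
  simp [indepSets]

lemma IsSymplecticMatroid.isAdmissibleSet_of_mem_indepSets {n : ℕ} {ℬ : Finset (Finset ℤ)}
    (hℬ : IsSymplecticMatroid n ℬ) {I : Finset ℤ} (hI : I ∈ indepSets n ℬ) :
    IsAdmissibleSet I := by
  obtain ⟨-, B, hB, hIB⟩ := mem_indepSets.mp hI
  exact (hℬ.2.1 B hB).2.mono hIB

section Greedy

variable {ℬ : Finset (Finset ℤ)}

lemma greedyAux_append_of_subset {P : List ℤ} {B B' : Finset ℤ} (hB' : B' ∈ ℬ)
    (hPB : B ∪ P.toFinset ⊆ B') (Q : List ℤ) :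
    greedyAux ℬ (P ++ Q) B = P ++ greedyAux ℬ Q (B ∪ P.toFinset) := by
  induction P generalizing B with
  | nil => simp
  | cons a P ih =>
    have hins : insert a B ∪ P.toFinset = B ∪ (a :: P).toFinset := by
      ext; simp
    have ha : insert a B ⊆ B' :=
      Finset.subset_union_left.trans (hins ▸ hPB)
    rw [List.cons_append, greedyAux, if_pos ⟨B', hB', ha⟩, ih (hins ▸ hPB), hins,
      List.cons_append]

lemma notMem_greedyAux {W B : Finset ℤ} {y : ℤ} (hWB : W ⊆ B)
    (hy : ∀ B' ∈ ℬ, ¬ insert y W ⊆ B') (l : List ℤ) : y ∉ greedyAux ℬ l B := by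
  induction l generalizing B with
  | nil => simp [greedyAux]
  | cons a l ih =>
    rw [greedyAux]
    split_ifs with h
    · rintro (_ | ⟨_, hmem⟩)
      · obtain ⟨B', hB', hsub⟩ := h
        exact hy B' hB' ((Finset.insert_subset_insert y hWB).trans hsub)
      · exact ih (hWB.trans (Finset.subset_insert a B)) hmem
    · exact ih hWB

end Greedy

section OrderList

variable {n : ℕ} {w : Equiv.Perm ℤ}

lemma orderList_pairwise (n : ℕ) (w : Equiv.Perm ℤ) :
    (orderList n w).Pairwise (fun a b => w b < w a) := by
  rw [orderList, List.pairwise_map]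
  simpa using List.pairwise_reverse.mpr (Finset.sortedLT_sort (SympE n)).pairwise

lemma mem_orderList {x : ℤ} : x ∈ orderList n w ↔ w x ∈ SympE n := by
  simp [orderList, Equiv.symm_apply_eq]

lemma isCompatibleWeight_indicator_of_orderList_eq_append (hw : IsAdmissiblePerm n w)
    {P Q : List ℤ} (h : orderList n w = P ++ Q) :
    IsCompatibleWeight n w (fun x => if x ∈ P then 1 else 0) := by
  intro i hi j hj hij
  by_cases hiP : i ∈ P
  · have hjP : j ∈ P := by
      by_contra hjP
      have hjQ : j ∈ Q := by
        simpa [h, hjP] using mem_orderList.mpr (hw.1 j hj)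
      have := orderList_pairwise n w
      rw [h, List.pairwise_append] at this
      exact (this.2.2 i hiP j hjQ).not_gt hij
    simp [hiP, hjP]
  · simp only [hiP, if_false]
    split_ifs <;> norm_num

lemma IsSymplecticMatroid.card_filter_le_card_filter_greedySol {ℬ : Finset (Finset ℤ)}
    (hℬ : IsSymplecticMatroid n ℬ) (hw : IsAdmissiblePerm n w) {P Q : List ℤ}
    (h : orderList n w = P ++ Q) {B : Finset ℤ} (hB : B ∈ ℬ) :
    (B.filter (· ∈ P)).card ≤ ((greedySol n ℬ w).filter (· ∈ P)).card := by
  have := hℬ.2.2.2 w hw _ (isCompatibleWeight_indicator_of_orderList_eq_append hw h) B hB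
  simp only [Finset.sum_boole] at this
  exact_mod_cast this

lemma notMem_greedySol {ℬ : Finset (Finset ℤ)} {P Q : List ℤ} (h : orderList n w = P ++ Q)
    {B : Finset ℤ} (hB : B ∈ ℬ) (hPB : P.toFinset ⊆ B) {y : ℤ}
    (hy : ∀ B' ∈ ℬ, ¬ insert y P.toFinset ⊆ B') : y ∉ greedySol n ℬ w := by
  have hyP : y ∉ P := fun hyP => hy B hB (by simpa [hyP] using hPB)
  rw [greedySol, greedyPicks, h, greedyAux_append_of_subset hB (by simpa using hPB),
    List.mem_toFinset, List.mem_append, not_or]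
  exact ⟨hyP, notMem_greedyAux Finset.subset_union_right hy Q⟩

end OrderList

lemma exists_admissiblePerm_orderList_eq {n : ℕ} {L : List ℤ} (hL : L.Nodup)
    (hLmem : ∀ x, x ∈ L ↔ x ∈ SympE n) (hLsymm : L.reverse = L.map (- ·)) :
    ∃ w, IsAdmissiblePerm n w ∧ orderList n w = L := by
  set D := ((SympE n).sort (· ≤ ·)).reverse
  have hDsymm : D.reverse = D.map (- ·) := by
    rw [List.map_reverse, ← sort_reverse_eq_map_neg fun x => neg_mem_sympE]
  obtain ⟨w, hwD, hwfix⟩ := List.exists_perm_map_eq (l' := D) hL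
    (List.nodup_reverse.mpr (Finset.sort_nodup _ _)) fun x => by simp [D, hLmem]
  refine ⟨w, ⟨fun x hx => ?_, fun x => ?_⟩, ?_⟩
  · simpa [hwD, D] using List.mem_map_of_mem (f := w) ((hLmem x).mpr hx)
  · by_cases hx : x ∈ L
    · have : (L.map (- ·)).map w = (L.map w).map (- ·) := by
        rw [← hLsymm, List.map_reverse, hwD, hDsymm]
      simp only [List.map_map, List.map_inj_left] at this
      exact this x hx
    · have hnx : -x ∉ L := fun h =>
        hx ((hLmem x).mpr (by simpa using neg_mem_sympE ((hLmem _).mp h)))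
      rw [hwfix x hx, hwfix (-x) hnx]
  · change D.map w.symm = L
    rw [← hwD, List.map_map]
    simp

lemma exists_admissiblePerm_orderList_eq_append {n : ℕ} {P : List ℤ} (hP : P.Nodup)
    (hPadm : IsAdmissibleSet P.toFinset) (hPE : P.toFinset ⊆ SympE n) :
    ∃ w, IsAdmissiblePerm n w ∧ ∃ Q, orderList n w = P ++ Q := by
  set R := (SympE n).filter (fun x => x ∉ P ∧ -x ∉ P)
  -- `P`, then the rest of `E_{±n}` in decreasing order, then `-P` backwards: reversing this
  -- list is the same as negating it
  set Q := (R.sort (· ≤ ·)).reverse ++ (P.map (- ·)).reverse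
  have hR : ∀ x ∈ R, -x ∈ R := fun x hx => by
    simp only [R, Finset.mem_filter, neg_neg] at hx ⊢
    exact ⟨neg_mem_sympE hx.1, hx.2.2, hx.2.1⟩
  have hsymm : (P ++ Q).reverse = (P ++ Q).map (- ·) := by
    simp only [Q, List.reverse_append, List.map_append, List.map_reverse, List.reverse_reverse,
      ← sort_reverse_eq_map_neg hR, List.map_map]
    simp
  have hmem : ∀ x, x ∈ P ++ Q ↔ x ∈ SympE n := by
    intro x
    have hx := @hPE x
    have hnx := @hPE (-x)
    have hnnx := @neg_mem_sympE n (-x)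
    simp only [List.mem_toFinset, neg_neg] at hx hnx hnnx
    simp only [Q, R, List.mem_append, List.mem_reverse, Finset.mem_sort, Finset.mem_filter,
      List.mem_map_of_involutive neg_involutive]
    tauto
  have hnd : (P ++ Q).Nodup := by
    simp only [Q, R, List.nodup_append, List.nodup_reverse, List.mem_append, List.mem_reverse,
      Finset.mem_sort, Finset.mem_filter, List.mem_map_of_involutive neg_involutive,
      Finset.sort_nodup, List.nodup_map_iff neg_injective, hP, true_and]
    constructor
    · rintro a ⟨-, -, ha⟩ b hb rfl
      exact ha hb
    · rintro a ha b (⟨-, hb, -⟩ | hb) rfl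
      · exact hb ha
      · exact hPadm a (by simpa using ha) (by simpa using hb)
  obtain ⟨w, hw, horder⟩ := exists_admissiblePerm_orderList_eq hnd hmem hsymm
  exact ⟨w, hw, Q, horder⟩

theorem exchange_witness_set_nonempty_general (n : ℕ)
    (ℬ : Finset (Finset ℤ)) (hB : IsSymplecticMatroid n ℬ)
    (I J : Finset ℤ)
    (hI : I ∈ indepSets n ℬ) (hJ : J ∈ indepSets n ℬ)
    (hcard : I.card < J.card)
    (W Y X S : Finset ℤ)
    (hW : W = I \ negSet J)
    (hY : Y = J \ (I ∪ negSet I))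
    (hS : S = X.filter
          (fun x => insert x W ∈ indepSets n ℬ ∧ insert (-x) W ∈ indepSets n ℬ)
        ∪ Y.filter (fun y => insert y W ∈ indepSets n ℬ)) :
    S.Nonempty := by
  by_contra hS_empty
  obtain ⟨hIE, BI, hBI, hIBI⟩ := mem_indepSets.mp hI
  obtain ⟨hJE, BJ, hBJ, hJBJ⟩ := mem_indepSets.mp hJ
  have hWI : W ⊆ I := hW ▸ Finset.sdiff_subset
  have hYJ : Y ⊆ J := hY ▸ Finset.sdiff_subset
  have hY_dep : ∀ y ∈ Y, ∀ B ∈ ℬ, ¬ insert y W ⊆ B := fun y hy B hB hyW =>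
    hS_empty ⟨y, hS ▸ Finset.mem_union_right _ (Finset.mem_filter.mpr ⟨hy,
      mem_indepSets.mpr ⟨Finset.insert_subset (hJE (hYJ hy)) (hWI.trans hIE), B, hB, hyW⟩⟩)⟩
  set P := W.sort (· ≤ ·) ++ (J \ W).sort (· ≤ ·)
  have hP : P.toFinset = W ∪ J := by
    ext x
    simp only [P, List.mem_toFinset, List.mem_append, Finset.mem_sort, Finset.mem_sdiff,
      Finset.mem_union]
    tauto
  have hU : IsAdmissibleSet (W ∪ J) :=
    ((hB.isAdmissibleSet_of_mem_indepSets hI).mono hWI).union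
      (hB.isAdmissibleSet_of_mem_indepSets hJ)
      fun x hx => by simp_all [mem_negSet]
  have hPnd : P.Nodup := (Finset.sort_nodup _ _).append (Finset.sort_nodup _ _) fun x hW hJW =>
    (Finset.mem_sdiff.mp ((Finset.mem_sort _).mp hJW)).2 ((Finset.mem_sort _).mp hW)
  obtain ⟨w, hw, Q, horder⟩ := exists_admissiblePerm_orderList_eq_append hPnd (hP ▸ hU)
    (hP ▸ Finset.union_subset (hWI.trans hIE) hJE)
  have hG_Y : ∀ y ∈ Y, y ∉ greedySol n ℬ w := fun y hy =>
    notMem_greedySol (horder.trans (List.append_assoc _ _ _)) hBI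
      (by rw [Finset.sort_toFinset]; exact hWI.trans hIBI)
      (by rw [Finset.sort_toFinset]; exact hY_dep y hy)
  have hG : (greedySol n ℬ w).filter (· ∈ P) ⊆ (W ∪ J) \ Y := fun x hx => by
    rw [Finset.mem_filter, ← List.mem_toFinset, hP] at hx
    exact Finset.mem_sdiff.mpr ⟨hx.2, fun hy => hG_Y x hy hx.1⟩
  have : J.card < J.card := calc
    J.card ≤ (BJ.filter (· ∈ P)).card := Finset.card_le_card fun x hx =>
        Finset.mem_filter.mpr ⟨hJBJ hx, by simpa [← List.mem_toFinset, hP] using Or.inr hx⟩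
    _ ≤ ((greedySol n ℬ w).filter (· ∈ P)).card :=
        hB.card_filter_le_card_filter_greedySol hw horder hBJ
    _ ≤ ((W ∪ J) \ Y).card := Finset.card_le_card hG
    _ ≤ I.card := card_le_of_subset_union_negSet (hU.mono Finset.sdiff_subset) fun x => by
        simp only [hW, hY, Finset.mem_sdiff, Finset.mem_union]
        tauto
    _ < J.card := hcard
  exact lt_irrefl _ this

/-- Let `ℐ` be the family of independent sets of a symplectic matroid
`(E_{±n}, ℬ)`, and let `I, J ∈ ℐ` with `|I| < |J|` and `{y} ∪ I ∉ ℐ` for all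
`y ∈ J \ I`.  With `W = I \ (-J)`, `Y = J \ (I ∪ (-I))`, `Z = I ∩ (-J)` and
`X = E_{±n} \ (W ∪ (-W) ∪ Y ∪ (-Y) ∪ Z ∪ (-Z))`, the set
`S = {x ∈ X : {x} ∪ W ∈ ℐ and {-x} ∪ W ∈ ℐ} ∪ {y ∈ Y : {y} ∪ W ∈ ℐ}`
is nonempty. -/
theorem exchange_witness_set_nonempty (n : ℕ) (hn : 0 < n)
    (ℬ : Finset (Finset ℤ)) (hB : IsSymplecticMatroid n ℬ)
    (I J : Finset ℤ)
    (hI : I ∈ indepSets n ℬ) (hJ : J ∈ indepSets n ℬ)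
    (hcard : I.card < J.card)
    (hy : ∀ y ∈ J \ I, insert y I ∉ indepSets n ℬ)
    (W Y Z X S : Finset ℤ)
    (hW : W = I \ negSet J)
    (hY : Y = J \ (I ∪ negSet I))
    (hZ : Z = I ∩ negSet J)
    (hX : X = SympE n \ (W ∪ negSet W ∪ Y ∪ negSet Y ∪ Z ∪ negSet Z))
    (hS : S = X.filter
          (fun x => insert x W ∈ indepSets n ℬ ∧ insert (-x) W ∈ indepSets n ℬ)
        ∪ Y.filter (fun y => insert y W ∈ indepSets n ℬ)) :
    S.Nonempty :=
  exchange_witness_set_nonempty_general n ℬ hB I J hI hJ hcard W Y X S hW hY hS
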